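/- Let X, U be finite sets, f : X × U × P(X) → P(X) a transition kernel, φ : X × P(X) → P(U) a policy, and define the pushforward map F(μ)(x') = ∑_{x∈X} ∑_{u∈U} f(x'|x,u,μ) φ(u|x,μ) μ(x). Suppose for all fixed (x,u): ∑_{x'} |f(x'|x,u,μ) − f(x'|x,u,μ')| ≤ L_f · 2 d_TV(μ,μ'), and for all x: ∑_u |φ(u|x,μ) − φ(u|x,μ')| ≤ L_φ · 2 d_TV(μ,μ'). Then d_TV(F(μ), F(μ')) ≤ (1 + L_f + L_φ) · d_TV(μ, μ'). -/

import Mathlib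

/-!
With `ν_μ(x, u) = φ(u|x,μ) μ(x)` the joint state–action law, `F(μ)` is the image of `ν_μ` under
the kernel `f(·|x,u,μ)`. Both steps `μ ↦ ν_μ ↦ F(μ)` multiply a stochastic kernel by a measure,
and `a b - a' b' = (a - a') b + a' (b - b')` with `∑ a' = 1` bounds the change of such a product
by the change of the kernel, weighted by the first measure, plus the change of the measure. Hence
`‖ν_μ - ν_μ'‖₁ ≤ (1 + L_φ) ‖μ - μ'‖₁` and `‖F μ - F μ'‖₁ ≤ L_f ‖μ - μ'‖₁ + ‖ν_μ - ν_μ'‖₁`.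
-/

open Finset

section KernelPerturbation

variable {ι κ : Type*} [Fintype ι] [Fintype κ]

theorem sum_abs_mul_sub_mul_le {a a' : ι → ℝ} (ha' : ∀ i, 0 ≤ a' i)
    (ha'_sum : ∑ i, a' i = 1) {b b' : ℝ} (hb : 0 ≤ b) :
    ∑ i, |a i * b - a' i * b'| ≤ (∑ i, |a i - a' i|) * b + |b - b'| := by
  have hterm : ∀ i, |a i * b - a' i * b'| ≤ |a i - a' i| * b + a' i * |b - b'| := fun i =>
    calc |a i * b - a' i * b'| = |(a i - a' i) * b + a' i * (b - b')| := by ring_nf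
      _ ≤ |(a i - a' i) * b| + |a' i * (b - b')| := abs_add_le _ _
      _ = |a i - a' i| * b + a' i * |b - b'| := by
        rw [abs_mul, abs_mul, abs_of_nonneg hb, abs_of_nonneg (ha' i)]
  calc ∑ i, |a i * b - a' i * b'| ≤ ∑ i, (|a i - a' i| * b + a' i * |b - b'|) :=
        sum_le_sum fun i _ => hterm i
    _ = (∑ i, |a i - a' i|) * b + |b - b'| := by
      rw [sum_add_distrib, ← sum_mul, ← sum_mul, ha'_sum, one_mul]

theorem sum_mul_le_of_le_of_sum_eq_one {g ν : κ → ℝ} {c : ℝ} (hg : ∀ j, g j ≤ c)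
    (hν : ∀ j, 0 ≤ ν j) (hν_sum : ∑ j, ν j = 1) : ∑ j, g j * ν j ≤ c :=
  calc ∑ j, g j * ν j ≤ ∑ j, c * ν j :=
        sum_le_sum fun j _ => mul_le_mul_of_nonneg_right (hg j) (hν j)
    _ = c := by rw [← mul_sum, hν_sum, mul_one]

theorem sum_sum_abs_mul_sub_mul_le (K K' : κ → ι → ℝ)
    (hK' : ∀ j, (∀ i, 0 ≤ K' j i) ∧ ∑ i, K' j i = 1) {ν ν' : κ → ℝ} (hν : ∀ j, 0 ≤ ν j) :
    ∑ j, ∑ i, |K j i * ν j - K' j i * ν' j|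
      ≤ ∑ j, (∑ i, |K j i - K' j i|) * ν j + ∑ j, |ν j - ν' j| :=
  calc ∑ j, ∑ i, |K j i * ν j - K' j i * ν' j|
      ≤ ∑ j, ((∑ i, |K j i - K' j i|) * ν j + |ν j - ν' j|) := sum_le_sum fun j _ =>
        sum_abs_mul_sub_mul_le (hK' j).1 (hK' j).2 (hν j)
    _ = ∑ j, (∑ i, |K j i - K' j i|) * ν j + ∑ j, |ν j - ν' j| := sum_add_distrib

theorem sum_abs_sub_kernel_apply_le (K K' : κ → ι → ℝ)
    (hK' : ∀ j, (∀ i, 0 ≤ K' j i) ∧ ∑ i, K' j i = 1) {ν ν' : κ → ℝ} (hν : ∀ j, 0 ≤ ν j) :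
    ∑ i, |∑ j, K j i * ν j - ∑ j, K' j i * ν' j|
      ≤ ∑ j, (∑ i, |K j i - K' j i|) * ν j + ∑ j, |ν j - ν' j| :=
  calc ∑ i, |∑ j, K j i * ν j - ∑ j, K' j i * ν' j|
      ≤ ∑ i, ∑ j, |K j i * ν j - K' j i * ν' j| := sum_le_sum fun i _ => by
        rw [← sum_sub_distrib]
        exact abs_sum_le_sum_abs _ _
    _ = ∑ j, ∑ i, |K j i * ν j - K' j i * ν' j| := sum_comm
    _ ≤ _ := sum_sum_abs_mul_sub_mul_le K K' hK' hν

end KernelPerturbation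

theorem mean_field_propagation_lipschitz_general
    {X U : Type*} [Fintype X] [Fintype U]
    (f : X → X → U → (X → ℝ) → ℝ)   -- f x' x u μ = f(x'|x,u,μ)
    (φ : U → X → (X → ℝ) → ℝ)       -- φ u x μ = φ(u|x,μ)
    (Lf Lφ : ℝ)
    (hf_pmf : ∀ x u μ, (∀ x', 0 ≤ f x' x u μ) ∧ ∑ x', f x' x u μ = 1)
    (hφ_pmf : ∀ x μ, (∀ u, 0 ≤ φ u x μ) ∧ ∑ u, φ u x μ = 1)
    (hf_lip : ∀ x u μ μ',
      ∑ x', |f x' x u μ - f x' x u μ'| ≤ Lf * (2 * ((1 / 2) * ∑ x, |μ x - μ' x|)))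
    (hφ_lip : ∀ x μ μ',
      ∑ u, |φ u x μ - φ u x μ'| ≤ Lφ * (2 * ((1 / 2) * ∑ x, |μ x - μ' x|)))
    (μ μ' : X → ℝ)
    (hμ : (∀ x, 0 ≤ μ x) ∧ ∑ x, μ x = 1) :
    (1 / 2) * ∑ x', |(∑ x, ∑ u, f x' x u μ * φ u x μ * μ x)
        - (∑ x, ∑ u, f x' x u μ' * φ u x μ' * μ' x)|
      ≤ (1 + Lf + Lφ) * ((1 / 2) * ∑ x, |μ x - μ' x|) := by
  set D := ∑ x, |μ x - μ' x|
  let ν : (X → ℝ) → X × U → ℝ := fun m p => φ p.2 p.1 m * m p.1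
  have hν_nonneg : ∀ p, 0 ≤ ν μ p := fun p => mul_nonneg ((hφ_pmf p.1 μ).1 p.2) (hμ.1 p.1)
  have hν_sum : ∑ p, ν μ p = 1 := by
    simp only [ν, Fintype.sum_prod_type, ← sum_mul, (hφ_pmf _ μ).2, one_mul, hμ.2]
  have hν_dist : ∑ p, |ν μ p - ν μ' p| ≤ Lφ * D + D :=
    calc ∑ p, |ν μ p - ν μ' p| = ∑ x, ∑ u, |φ u x μ * μ x - φ u x μ' * μ' x| :=
          Fintype.sum_prod_type _
      _ ≤ ∑ x, (∑ u, |φ u x μ - φ u x μ'|) * μ x + D :=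
          sum_sum_abs_mul_sub_mul_le _ _ (hφ_pmf · μ') hμ.1
      _ ≤ Lφ * D + D := by
          gcongr
          exact sum_mul_le_of_le_of_sum_eq_one (fun x => (hφ_lip x μ μ').trans_eq (by ring))
            hμ.1 hμ.2
  have hf_part : ∑ p, (∑ x', |f x' p.1 p.2 μ - f x' p.1 p.2 μ'|) * ν μ p ≤ Lf * D :=
    sum_mul_le_of_le_of_sum_eq_one (fun p => (hf_lip p.1 p.2 μ μ').trans_eq (by ring))
      hν_nonneg hν_sum
  have hF : ∀ m x', ∑ x, ∑ u, f x' x u m * φ u x m * m x = ∑ p, f x' p.1 p.2 m * ν m p :=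
    fun m x' => by simp only [ν, Fintype.sum_prod_type, mul_assoc]
  simp only [hF]
  have hpush := sum_abs_sub_kernel_apply_le (fun p x' => f x' p.1 p.2 μ)
    (fun p x' => f x' p.1 p.2 μ') (fun p => hf_pmf p.1 p.2 μ') (ν' := ν μ') hν_nonneg
  linarith

theorem mean_field_propagation_lipschitz
    {X U : Type*} [Fintype X] [Fintype U]
    (f : X → X → U → (X → ℝ) → ℝ)   -- f x' x u μ = f(x'|x,u,μ)
    (φ : U → X → (X → ℝ) → ℝ)       -- φ u x μ = φ(u|x,μ)
    (Lf Lφ : ℝ)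
    (hf_pmf : ∀ x u μ, (∀ x', 0 ≤ f x' x u μ) ∧ ∑ x', f x' x u μ = 1)
    (hφ_pmf : ∀ x μ, (∀ u, 0 ≤ φ u x μ) ∧ ∑ u, φ u x μ = 1)
    (hf_lip : ∀ x u μ μ',
      ∑ x', |f x' x u μ - f x' x u μ'| ≤ Lf * (2 * ((1 / 2) * ∑ x, |μ x - μ' x|)))
    (hφ_lip : ∀ x μ μ',
      ∑ u, |φ u x μ - φ u x μ'| ≤ Lφ * (2 * ((1 / 2) * ∑ x, |μ x - μ' x|)))
    (μ μ' : X → ℝ)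
    (hμ : (∀ x, 0 ≤ μ x) ∧ ∑ x, μ x = 1)
    (hμ' : (∀ x, 0 ≤ μ' x) ∧ ∑ x, μ' x = 1) :
    (1 / 2) * ∑ x', |(∑ x, ∑ u, f x' x u μ * φ u x μ * μ x)
        - (∑ x, ∑ u, f x' x u μ' * φ u x μ' * μ' x)|
      ≤ (1 + Lf + Lφ) * ((1 / 2) * ∑ x, |μ x - μ' x|) :=
  mean_field_propagation_lipschitz_general f φ Lf Lφ hf_pmf hφ_pmf hf_lip hφ_lip μ μ' hμ
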